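/- arXiv:2505.13660 — 4 statements merged into one kernel-verified Lean document; each statement's English description precedes it below -/
import Mathlib

section
/- Dual formula for the proximal value: for any Lipschitz continuous φ on convex compact Ω ⊂ ℝ^d, constant a > 0, and absolutely continuous probability measure μ on Ω, inf_{ρ ∈ P₂(Ω)} [ ∫_Ω φ dρ + (a/2) W₂²(μ, ρ) ] = ∫_Ω a · (−φ/a)^c dμ, where (−φ/a)^c(x) = inf_{y∈Ω} { ‖x−y‖²/2 + φ(y)/a }. -/
/-!
For a continuous cost `c` and `ψ` continuous on the compact `Ω`, put
`h x = ⨅ y ∈ Ω, c x y + ψ y`; with `c x y = a/2 ‖x - y‖²` and `ψ = φ`, `h = a (-φ/a)^c`.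
Integrating `h x ≤ c x y + ψ y` against any coupling of `μ` and `ρ` shows `∫ h dμ ≤ ∫ ψ dρ + ∫ c`.
Conversely `h` is continuous, so along a dense sequence `yₙ` of `Ω` the sets
`{x | c x yₙ + ψ yₙ < h x + ε}` are measurable and cover the space; sending `x` to the first such
`yₙ` gives a measurable `ε`-optimal map `T`, and `ρ = T₊μ` with the coupling `(id, T)₊μ` comes
within `ε` of `∫ h dμ`.
-/

open MeasureTheory

/-- The c-transform with cost `c(x,y) = ‖x-y‖²/2`, infimum taken over `Ω`. -/
noncomputable def ctrans {d : ℕ} (Ω : Set (EuclideanSpace ℝ (Fin d)))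
    (f : EuclideanSpace ℝ (Fin d) → ℝ) (x : EuclideanSpace ℝ (Fin d)) : ℝ :=
  ⨅ y : Ω, (‖x - (y : EuclideanSpace ℝ (Fin d))‖ ^ 2 / 2 - f y)

/-- The squared 2-Wasserstein distance, as the infimum of the transport cost over couplings. -/
noncomputable def W2sq {d : ℕ} (μ ν : Measure (EuclideanSpace ℝ (Fin d))) : ℝ :=
  sInf { r : ℝ | ∃ π : Measure (EuclideanSpace ℝ (Fin d) × EuclideanSpace ℝ (Fin d)),
    π.map Prod.fst = μ ∧ π.map Prod.snd = ν ∧ r = ∫ p, ‖p.1 - p.2‖ ^ 2 ∂π }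

open Set

theorem IsCompact.iInf_le_of_continuousOn {E : Type*} [TopologicalSpace E] {Ω : Set E}
    {f : E → ℝ} (hΩ : IsCompact Ω) (hf : ContinuousOn f Ω) {y : E} (hy : y ∈ Ω) :
    ⨅ z : Ω, f z ≤ f y :=
  ciInf_le (by simpa only [image_eq_range] using hΩ.bddBelow_image hf) (⟨y, hy⟩ : Ω)

theorem ContinuousOn.integrable_of_ae_mem {X E : Type*} [TopologicalSpace X] [T2Space X]
    [MeasurableSpace X] [OpensMeasurableSpace X] [NormedAddCommGroup E] {μ : Measure X}
    [IsFiniteMeasure μ] {K : Set X} {f : X → E} (hK : IsCompact K) (hf : ContinuousOn f K)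
    (hμ : ∀ᵐ x ∂μ, x ∈ K) : Integrable f μ := by
  rw [← Measure.restrict_eq_self_of_ae_mem hμ]
  exact hf.integrableOn_compact hK

section Marginals

variable {X Y : Type*} [MeasurableSpace X] [MeasurableSpace Y] {π : Measure (X × Y)}
  {s : Set X} {t : Set Y}

theorem ae_mem_prod_of_ae_map (hs : ∀ᵐ x ∂π.map Prod.fst, x ∈ s)
    (ht : ∀ᵐ y ∂π.map Prod.snd, y ∈ t) : ∀ᵐ p ∂π, p ∈ s ×ˢ t := by
  filter_upwards [ae_of_ae_map measurable_fst.aemeasurable hs,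
    ae_of_ae_map measurable_snd.aemeasurable ht] with p h₁ h₂ using ⟨h₁, h₂⟩

theorem ae_map_snd_mem (ht : MeasurableSet t) (hπ : ∀ᵐ p ∂π, p ∈ s ×ˢ t) :
    ∀ᵐ y ∂π.map Prod.snd, y ∈ t :=
  (ae_map_iff measurable_snd.aemeasurable ht).2 (hπ.mono fun _ hp => hp.2)

end Marginals

theorem exists_measurable_mem_lt {X Y : Type*} [MeasurableSpace X] [TopologicalSpace Y]
    [MeasurableSpace Y] {s : Set Y} [TopologicalSpace.SeparableSpace s] (hs : s.Nonempty)
    {F : X → Y → ℝ} {m : X → ℝ} (hF : ∀ x, ContinuousOn (F x) s)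
    (hFm : ∀ y, Measurable fun x => F x y) (hm : Measurable m) (h : ∀ x, ∃ y ∈ s, F x y < m x) :
    ∃ T : X → Y, Measurable T ∧ (∀ x, T x ∈ s) ∧ ∀ x, F x (T x) < m x := by
  classical
  have := hs.to_subtype
  obtain ⟨u, hu⟩ := TopologicalSpace.exists_dense_seq s
  have hex : ∀ x, ∃ n, F x (u n) < m x := by
    intro x
    obtain ⟨y, hy, hlt⟩ := h x
    have hopen : IsOpen {z : s | F x z < m x} :=
      isOpen_lt (hF x).domRestrict continuous_const
    exact hu.exists_mem_open hopen ⟨⟨y, hy⟩, hlt⟩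
  exact ⟨fun x => u (Nat.find (hex x)),
    Measurable.find (f := fun n _ => (u n : Y)) (fun _ => measurable_const)
      (fun n => measurableSet_lt (hFm _) hm) hex,
    fun x => (u _).2, fun x => Nat.find_spec (hex x)⟩

section InfConvolution

variable {E : Type*} [TopologicalSpace E] {Ω : Set E} {c : E → E → ℝ} {ψ : E → ℝ}

theorem continuous_iInf_add (hΩ : IsCompact Ω) (hc : Continuous fun p : E × E => c p.1 p.2)
    (hψ : ContinuousOn ψ Ω) : Continuous fun x => ⨅ y : Ω, c x y + ψ y := by
  have := isCompact_iff_compactSpace.1 hΩ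
  have hcont : Continuous fun p : E × Ω => c p.1 p.2 + ψ p.2 :=
    (hc.comp (continuous_fst.prodMk (continuous_subtype_val.comp continuous_snd))).add
      (hψ.domRestrict.comp continuous_snd)
  refine (isCompact_univ.continuous_sInf (f := fun x (y : Ω) => c x y + ψ y) hcont).congr
    fun x => ?_
  rw [image_univ]
  rfl

theorem continuousOn_cost_add (hc : Continuous fun p : E × E => c p.1 p.2)
    (hψ : ContinuousOn ψ Ω) (x : E) : ContinuousOn (fun y => c x y + ψ y) Ω :=
  (hc.comp (continuous_const.prodMk continuous_id)).continuousOn.add hψ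

variable [MeasurableSpace E] [BorelSpace E] [SecondCountableTopology E] [T2Space E]

theorem integrable_add_snd (hΩ : IsCompact Ω) (hc : Continuous fun p : E × E => c p.1 p.2)
    (hψ : ContinuousOn ψ Ω) {π : Measure (E × E)} [IsFiniteMeasure π]
    (hπ : ∀ᵐ p ∂π, p ∈ Ω ×ˢ Ω) : Integrable (fun p => c p.1 p.2 + ψ p.2) π :=
  (hc.continuousOn.add (hψ.comp continuous_snd.continuousOn fun _ hp => hp.2)).integrable_of_ae_mem
    (hΩ.prod hΩ) hπ

theorem integral_add_snd_eq (hΩ : IsCompact Ω) (hc : Continuous fun p : E × E => c p.1 p.2)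
    (hψ : ContinuousOn ψ Ω) {π : Measure (E × E)} [IsFiniteMeasure π]
    (hπ : ∀ᵐ p ∂π, p ∈ Ω ×ˢ Ω) :
    ∫ p, (c p.1 p.2 + ψ p.2) ∂π = ∫ p, c p.1 p.2 ∂π + ∫ y, ψ y ∂π.map Prod.snd := by
  have hψ_snd : Integrable ψ (π.map Prod.snd) :=
    hψ.integrable_of_ae_mem hΩ (ae_map_snd_mem hΩ.measurableSet hπ)
  rw [integral_add (g := fun p => ψ p.2) (hc.continuousOn.integrable_of_ae_mem (hΩ.prod hΩ) hπ)
      ((hψ.comp continuous_snd.continuousOn fun _ hp => hp.2).integrable_of_ae_mem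
        (hΩ.prod hΩ) hπ),
    integral_map measurable_snd.aemeasurable hψ_snd.aestronglyMeasurable]

theorem integral_iInf_add_le (hΩ : IsCompact Ω) (hc : Continuous fun p : E × E => c p.1 p.2)
    (hψ : ContinuousOn ψ Ω) {π : Measure (E × E)} [IsFiniteMeasure π]
    (hπ : ∀ᵐ p ∂π, p ∈ Ω ×ˢ Ω) :
    ∫ x, (⨅ y : Ω, c x y + ψ y) ∂π.map Prod.fst ≤ ∫ p, (c p.1 p.2 + ψ p.2) ∂π := by
  have hcont := continuous_iInf_add hΩ hc hψ
  rw [integral_map measurable_fst.aemeasurable hcont.aestronglyMeasurable]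
  refine integral_mono_ae
    ((hcont.comp continuous_fst).continuousOn.integrable_of_ae_mem (hΩ.prod hΩ) hπ)
    (integrable_add_snd hΩ hc hψ hπ) ?_
  filter_upwards [hπ] with p hp
  exact hΩ.iInf_le_of_continuousOn (continuousOn_cost_add hc hψ p.1) hp.2

theorem exists_coupling_integral_add_le (hΩ : IsCompact Ω)
    (hc : Continuous fun p : E × E => c p.1 p.2) (hψ : ContinuousOn ψ Ω) {μ : Measure E}
    [IsProbabilityMeasure μ] (hμ : ∀ᵐ x ∂μ, x ∈ Ω) {ε : ℝ} (hε : 0 < ε) :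
    ∃ π : Measure (E × E), IsProbabilityMeasure π ∧ π.map Prod.fst = μ ∧
      (∀ᵐ p ∂π, p ∈ Ω ×ˢ Ω) ∧
      ∫ p, (c p.1 p.2 + ψ p.2) ∂π ≤ ∫ x, (⨅ y : Ω, c x y + ψ y) ∂μ + ε := by
  set h : E → ℝ := fun x => ⨅ y : Ω, c x y + ψ y
  have hcont : Continuous h := continuous_iInf_add hΩ hc hψ
  obtain ⟨x₀, hx₀⟩ : ∃ x, x ∈ Ω := hμ.exists
  have : Nonempty Ω := ⟨⟨x₀, hx₀⟩⟩
  have hnear : ∀ x, ∃ y ∈ Ω, c x y + ψ y < h x + ε := by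
    intro x
    obtain ⟨y, hy⟩ := exists_lt_of_ciInf_lt (lt_add_of_pos_right (h x) hε)
    exact ⟨y, y.2, hy⟩
  obtain ⟨T, hT, hTΩ, hTlt⟩ := exists_measurable_mem_lt ⟨x₀, hx₀⟩
    (F := fun x y => c x y + ψ y)
    (continuousOn_cost_add hc hψ)
    (fun y => (hc.comp (continuous_id.prodMk continuous_const)).measurable.add_const _)
    (hcont.measurable.add_const ε) hnear
  have hgraph : Measurable fun x => (x, T x) := measurable_id.prodMk hT
  have hπΩ : ∀ᵐ p ∂μ.map fun x => (x, T x), p ∈ Ω ×ˢ Ω := by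
    rw [ae_map_iff hgraph.aemeasurable (p := fun p => p ∈ Ω ×ˢ Ω) (hΩ.prod hΩ).measurableSet]
    filter_upwards [hμ] with x hx using ⟨hx, hTΩ x⟩
  refine ⟨μ.map fun x => (x, T x), Measure.isProbabilityMeasure_map hgraph.aemeasurable, ?_,
    hπΩ, ?_⟩
  · rw [Measure.map_map measurable_fst hgraph]
    exact Measure.map_id
  have hint := integrable_add_snd hΩ hc hψ hπΩ
  have hint_h : Integrable h μ := hcont.continuousOn.integrable_of_ae_mem hΩ hμ
  rw [integral_map hgraph.aemeasurable hint.aestronglyMeasurable]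
  calc ∫ x, c x (T x) + ψ (T x) ∂μ ≤ ∫ x, (h x + ε) ∂μ :=
        integral_mono (hint.comp_measurable hgraph) (hint_h.add (integrable_const ε))
          fun x => (hTlt x).le
    _ = ∫ x, h x ∂μ + ε := by
      rw [integral_add hint_h (integrable_const ε), integral_const, probReal_univ, one_smul]

end InfConvolution

section Wasserstein

variable {d : ℕ} {Ω : Set (EuclideanSpace ℝ (Fin d))} {ψ : EuclideanSpace ℝ (Fin d) → ℝ}
  {a : ℝ} {μ ν : Measure (EuclideanSpace ℝ (Fin d))}

theorem mul_ctrans_neg_div (ha : 0 < a) (x : EuclideanSpace ℝ (Fin d)) :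
    a * ctrans Ω (fun y => -(ψ y) / a) x = ⨅ y : Ω, a / 2 * ‖x - y‖ ^ 2 + ψ y := by
  rw [ctrans, Real.mul_iInf_of_nonneg ha.le]
  refine iInf_congr fun y => ?_
  field_simp
  ring

theorem W2sq_le_integral {π : Measure (EuclideanSpace ℝ (Fin d) × EuclideanSpace ℝ (Fin d))}
    (h₁ : π.map Prod.fst = μ) (h₂ : π.map Prod.snd = ν) :
    W2sq μ ν ≤ ∫ p, ‖p.1 - p.2‖ ^ 2 ∂π :=
  csInf_le ⟨0, by rintro _ ⟨π, -, -, rfl⟩; positivity⟩ ⟨π, h₁, h₂, rfl⟩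

theorem le_W2sq [IsProbabilityMeasure μ] [IsProbabilityMeasure ν] {b : ℝ}
    (h : ∀ π : Measure (EuclideanSpace ℝ (Fin d) × EuclideanSpace ℝ (Fin d)),
      π.map Prod.fst = μ → π.map Prod.snd = ν → b ≤ ∫ p, ‖p.1 - p.2‖ ^ 2 ∂π) :
    b ≤ W2sq μ ν :=
  le_csInf ⟨_, μ.prod ν, by simp, by simp, rfl⟩ (by rintro _ ⟨π, h₁, h₂, rfl⟩; exact h π h₁ h₂)

theorem integral_iInf_le_integral_add_W2sq (hΩ : IsCompact Ω) (hψ : ContinuousOn ψ Ω)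
    (ha : 0 < a) [hμ : IsProbabilityMeasure μ] (hμΩ : μ Ωᶜ = 0) [IsProbabilityMeasure ν]
    (hνΩ : ν Ωᶜ = 0) :
    ∫ x, (⨅ y : Ω, a / 2 * ‖x - y‖ ^ 2 + ψ y) ∂μ ≤ ∫ y, ψ y ∂ν + a / 2 * W2sq μ ν := by
  have hc : Continuous fun p : EuclideanSpace ℝ (Fin d) × EuclideanSpace ℝ (Fin d) =>
      a / 2 * ‖p.1 - p.2‖ ^ 2 := by fun_prop
  suffices (∫ x, (⨅ y : Ω, a / 2 * ‖x - y‖ ^ 2 + ψ y) ∂μ - ∫ y, ψ y ∂ν) / (a / 2) ≤ W2sq μ ν by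
    rw [div_le_iff₀' (by positivity)] at this
    linarith
  refine le_W2sq fun π hπ₁ hπ₂ => ?_
  have : IsProbabilityMeasure (π.map Prod.fst) := hπ₁ ▸ hμ
  have : IsProbabilityMeasure π := Measure.isProbabilityMeasure_of_map Prod.fst
  have hπΩ : ∀ᵐ p ∂π, p ∈ Ω ×ˢ Ω :=
    ae_mem_prod_of_ae_map (hπ₁ ▸ mem_ae_iff.2 hμΩ) (hπ₂ ▸ mem_ae_iff.2 hνΩ)
  have hdual := integral_iInf_add_le (c := fun x y => a / 2 * ‖x - y‖ ^ 2) hΩ hc hψ hπΩ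
  rw [integral_add_snd_eq (c := fun x y => a / 2 * ‖x - y‖ ^ 2) hΩ hc hψ hπΩ,
    integral_const_mul, hπ₁, hπ₂] at hdual
  rw [div_le_iff₀' (by positivity)]
  linarith

theorem exists_integral_add_W2sq_le (hΩ : IsCompact Ω) (hψ : ContinuousOn ψ Ω) (ha : 0 ≤ a)
    [IsProbabilityMeasure μ] (hμΩ : μ Ωᶜ = 0) {ε : ℝ} (hε : 0 < ε) :
    ∃ ν : Measure (EuclideanSpace ℝ (Fin d)), IsProbabilityMeasure ν ∧ ν Ωᶜ = 0 ∧
      ∫ y, ψ y ∂ν + a / 2 * W2sq μ ν ≤ ∫ x, (⨅ y : Ω, a / 2 * ‖x - y‖ ^ 2 + ψ y) ∂μ + ε := by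
  have hc : Continuous fun p : EuclideanSpace ℝ (Fin d) × EuclideanSpace ℝ (Fin d) =>
      a / 2 * ‖p.1 - p.2‖ ^ 2 := by fun_prop
  obtain ⟨π, hπ, hπ₁, hπΩ, hπε⟩ :=
    exists_coupling_integral_add_le (c := fun x y => a / 2 * ‖x - y‖ ^ 2) hΩ hc hψ
      (mem_ae_iff.2 hμΩ) hε
  refine ⟨π.map Prod.snd, Measure.isProbabilityMeasure_map measurable_snd.aemeasurable,
    mem_ae_iff.1 (ae_map_snd_mem hΩ.measurableSet hπΩ), le_trans ?_ hπε⟩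
  rw [integral_add_snd_eq (c := fun x y => a / 2 * ‖x - y‖ ^ 2) hΩ hc hψ hπΩ,
    integral_const_mul, add_comm]
  gcongr
  exact W2sq_le_integral hπ₁ rfl

end Wasserstein

theorem proximal_dual_formula_general {d : ℕ} (Ω : Set (EuclideanSpace ℝ (Fin d)))
    (hcomp : IsCompact Ω)
    (φ : EuclideanSpace ℝ (Fin d) → ℝ) (K : NNReal) (hφ : LipschitzOnWith K φ Ω)
    (a : ℝ) (ha : 0 < a)
    (μ : Measure (EuclideanSpace ℝ (Fin d))) (hμ : IsProbabilityMeasure μ)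
    (hμΩ : μ Ωᶜ = 0) :
    sInf { v : ℝ | ∃ ρ : Measure (EuclideanSpace ℝ (Fin d)),
        IsProbabilityMeasure ρ ∧ ρ Ωᶜ = 0 ∧
        v = (∫ x, φ x ∂ρ) + a / 2 * W2sq μ ρ } =
      ∫ x, a * ctrans Ω (fun y => -(φ y) / a) x ∂μ := by
  simp_rw [mul_ctrans_neg_div ha]
  have hlower : ∀ v ∈ { v : ℝ | ∃ ρ : Measure (EuclideanSpace ℝ (Fin d)),
      IsProbabilityMeasure ρ ∧ ρ Ωᶜ = 0 ∧ v = (∫ x, φ x ∂ρ) + a / 2 * W2sq μ ρ },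
      ∫ x, (⨅ y : Ω, a / 2 * ‖x - y‖ ^ 2 + φ y) ∂μ ≤ v := by
    rintro _ ⟨ρ, hρ, hρΩ, rfl⟩
    exact integral_iInf_le_integral_add_W2sq hcomp hφ.continuousOn ha hμΩ hρΩ
  refine le_antisymm (le_of_forall_pos_le_add fun ε hε => ?_)
    (le_csInf ⟨_, μ, hμ, hμΩ, rfl⟩ hlower)
  obtain ⟨ρ, hρ, hρΩ, hρε⟩ := exists_integral_add_W2sq_le hcomp hφ.continuousOn ha.le hμΩ hε
  exact (csInf_le ⟨_, hlower⟩ ⟨ρ, hρ, hρΩ, rfl⟩).trans hρε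

/-- Dual formula for the proximal value: for Lipschitz `φ`, `a > 0` and an absolutely
continuous probability measure `μ` on a convex compact `Ω`,
`inf_ρ [∫ φ dρ + (a/2) W₂²(μ,ρ)] = ∫ a (−φ/a)^c dμ`. -/
theorem proximal_dual_formula {d : ℕ} (Ω : Set (EuclideanSpace ℝ (Fin d)))
    (hconv : Convex ℝ Ω) (hcomp : IsCompact Ω) (hne : Ω.Nonempty)
    (φ : EuclideanSpace ℝ (Fin d) → ℝ) (K : NNReal) (hφ : LipschitzOnWith K φ Ω)
    (a : ℝ) (ha : 0 < a)
    (μ : Measure (EuclideanSpace ℝ (Fin d))) (hμ : IsProbabilityMeasure μ)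
    (hμΩ : μ Ωᶜ = 0) (hac : μ ≪ volume) :
    sInf { v : ℝ | ∃ ρ : Measure (EuclideanSpace ℝ (Fin d)),
        IsProbabilityMeasure ρ ∧ ρ Ωᶜ = 0 ∧
        v = (∫ x, φ x ∂ρ) + a / 2 * W2sq μ ρ } =
      ∫ x, a * ctrans Ω (fun y => -(φ y) / a) x ∂μ :=
  proximal_dual_formula_general Ω hcomp φ K hφ a ha μ hμ hμΩ
end

section
/- Lower bound part of strong duality for the Wasserstein barycenter: for absolutely continuous μ₁,…,μ_m on convex compact Ω, inf_{ρ ∈ P₂(Ω)} ∑_{i=1}^m (α_i/2) W₂²(μ_i, ρ) ≥ sup over continuous f₁,…,f_{m−1} of ∑_{i=1}^{m−1} α_i ∫ f_i^c dμ_i + α_m ∫ (−∑_{i=1}^{m−1} (α_i/α_m) f_i)^c dμ_m. -/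
open MeasureTheory
open scoped BigOperators

/-- The dual barycenter functional, with the first `n = m−1` potentials indexed by `Fin n`. -/
noncomputable def Dfun {d n : ℕ} (Ω : Set (EuclideanSpace ℝ (Fin d)))
    (α : Fin n → ℝ) (αm : ℝ)
    (μ : Fin n → Measure (EuclideanSpace ℝ (Fin d)))
    (μm : Measure (EuclideanSpace ℝ (Fin d)))
    (f : Fin n → EuclideanSpace ℝ (Fin d) → ℝ) : ℝ :=
  (∑ i, α i * ∫ x, ctrans Ω (f i) x ∂(μ i)) +
    αm * ∫ x, ctrans Ω (fun y => -∑ i, (α i / αm) * f i y) x ∂μm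

/-!
For a fixed candidate barycenter `ρ`, integrating the c-transform inequality
`f^c(x) + f(y) ≤ ‖x - y‖² / 2` against an arbitrary coupling of `μᵢ` and `ρ` gives
`∫ fᵢ^c dμᵢ + ∫ fᵢ dρ ≤ W₂²(μᵢ, ρ) / 2`. Weighting these inequalities by `αᵢ` and summing, the
`ρ`-integrals cancel, because the last potential is `-∑ (αᵢ / αₘ) fᵢ`.
-/

theorem integral_add_integral_le_of_map_eq {X Y : Type*} [MeasurableSpace X] [MeasurableSpace Y]
    {π : Measure (X × Y)} {μ : Measure X} {ν : Measure Y}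
    (hfst : π.map Prod.fst = μ) (hsnd : π.map Prod.snd = ν)
    {φ : X → ℝ} {ψ : Y → ℝ} {c : X × Y → ℝ} (hφ : Integrable φ μ) (hψ : Integrable ψ ν)
    (hc : Integrable c π) (hle : ∀ᵐ p ∂π, φ p.1 + ψ p.2 ≤ c p) :
    ∫ x, φ x ∂μ + ∫ y, ψ y ∂ν ≤ ∫ p, c p ∂π := by
  subst hfst hsnd
  have hφπ : Integrable (fun p => φ p.1) π := hφ.comp_measurable measurable_fst
  have hψπ : Integrable (fun p => ψ p.2) π := hψ.comp_measurable measurable_snd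
  rw [integral_map measurable_fst.aemeasurable hφ.aestronglyMeasurable,
    integral_map measurable_snd.aemeasurable hψ.aestronglyMeasurable, ← integral_add hφπ hψπ]
  exact integral_mono_ae (hφπ.add hψπ) hc hle

theorem integrable_of_continuousOn_of_ae_mem {X F : Type*} [TopologicalSpace X] [T2Space X]
    [MeasurableSpace X] [OpensMeasurableSpace X] [NormedAddCommGroup F]
    {μ : Measure X} [IsFiniteMeasure μ] {K : Set X}
    (hK : IsCompact K) (hμK : ∀ᵐ x ∂μ, x ∈ K) {g : X → F} (hg : ContinuousOn g K) :
    Integrable g μ := by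
  simpa only [IntegrableOn, Measure.restrict_eq_self_of_ae_mem hμK]
    using hg.integrableOn_compact (μ := μ) hK

theorem mul_integral_neg_sum_div {X ι : Type*} [MeasurableSpace X] [Fintype ι] {ρ : Measure X}
    {f : ι → X → ℝ} (hf : ∀ i, Integrable (f i) ρ) (α : ι → ℝ) {αm : ℝ} (hαm : αm ≠ 0) :
    αm * ∫ x, -∑ i, α i / αm * f i x ∂ρ = -∑ i, α i * ∫ x, f i x ∂ρ := by
  rw [integral_neg, integral_finsetSum _ fun i _ => (hf i).const_mul _, mul_neg, Finset.mul_sum]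
  simp only [integral_const_mul]
  congr 1
  refine Finset.sum_congr rfl fun i _ => ?_
  field_simp

section Wasserstein

variable {d : ℕ}

local notation "E" => EuclideanSpace ℝ (Fin d)

theorem continuous_ctrans {Ω : Set E} (hΩ : IsCompact Ω) {f : E → ℝ} (hf : ContinuousOn f Ω) :
    Continuous (ctrans Ω f) := by
  have : CompactSpace Ω := isCompact_iff_compactSpace.mp hΩ
  have hf' : Continuous fun y : Ω => f y := hf.domRestrict
  have hcont : Continuous ↿(fun (x : E) (y : Ω) => ‖x - (y : E)‖ ^ 2 / 2 - f y : E → Ω → ℝ) :=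
    ((continuous_fst.sub (continuous_subtype_val.comp continuous_snd)).norm.pow 2).div_const 2
      |>.sub (hf'.comp continuous_snd)
  have h := isCompact_univ.continuous_sInf hcont
  simp_rw [Set.image_univ] at h
  exact h

theorem ctrans_add_le {Ω : Set E} {f : E → ℝ} (hf : BddAbove (f '' Ω)) (x : E) {y : E}
    (hy : y ∈ Ω) : ctrans Ω f x + f y ≤ ‖x - y‖ ^ 2 / 2 := by
  obtain ⟨M, hM⟩ := hf
  have hbdd : BddBelow (Set.range fun z : Ω => ‖x - (z : E)‖ ^ 2 / 2 - f z) := by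
    refine ⟨-M, ?_⟩
    rintro r ⟨z, rfl⟩
    have := hM (Set.mem_image_of_mem f z.2)
    nlinarith [sq_nonneg ‖x - (z : E)‖]
  have hle : ctrans Ω f x ≤ ‖x - y‖ ^ 2 / 2 - f y := ciInf_le hbdd ⟨y, hy⟩
  linarith

theorem two_mul_integral_add_le_W2sq {Ω : Set E} (hΩ : IsCompact Ω)
    {μ ρ : Measure E} [IsProbabilityMeasure μ] [IsProbabilityMeasure ρ]
    (hμΩ : μ Ωᶜ = 0) (hρΩ : ρ Ωᶜ = 0) {φ ψ : E → ℝ} (hφ : ContinuousOn φ Ω)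
    (hψ : ContinuousOn ψ Ω) (hle : ∀ x ∈ Ω, ∀ y ∈ Ω, φ x + ψ y ≤ ‖x - y‖ ^ 2 / 2) :
    2 * (∫ x, φ x ∂μ + ∫ y, ψ y ∂ρ) ≤ W2sq μ ρ := by
  refine le_csInf ⟨_, μ.prod ρ, by simp, by simp, rfl⟩ ?_
  rintro _ ⟨π, hfst, hsnd, rfl⟩
  have : IsProbabilityMeasure (π.map Prod.fst) := hfst ▸ ‹_›
  have : IsProbabilityMeasure π := Measure.isProbabilityMeasure_of_map Prod.fst
  have hπΩ : ∀ᵐ p ∂π, p ∈ Ω ×ˢ Ω := by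
    have h₁ := ae_of_ae_map measurable_fst.aemeasurable (hfst ▸ ae_iff.mpr hμΩ)
    have h₂ := ae_of_ae_map measurable_snd.aemeasurable (hsnd ▸ ae_iff.mpr hρΩ)
    filter_upwards [h₁, h₂] with p using And.intro
  have hc : Integrable (fun p : E × E => ‖p.1 - p.2‖ ^ 2 / 2) π :=
    integrable_of_continuousOn_of_ae_mem (hΩ.prod hΩ) hπΩ (by fun_prop)
  have := integral_add_integral_le_of_map_eq hfst hsnd
    (integrable_of_continuousOn_of_ae_mem hΩ (ae_iff.mpr hμΩ) hφ)
    (integrable_of_continuousOn_of_ae_mem hΩ (ae_iff.mpr hρΩ) hψ) hc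
    (hπΩ.mono fun p hp => hle _ hp.1 _ hp.2)
  rw [integral_div] at this
  linarith

theorem two_mul_integral_ctrans_add_le_W2sq {Ω : Set E} (hΩ : IsCompact Ω)
    {μ ρ : Measure E} [IsProbabilityMeasure μ] [IsProbabilityMeasure ρ]
    (hμΩ : μ Ωᶜ = 0) (hρΩ : ρ Ωᶜ = 0) {f : E → ℝ} (hf : ContinuousOn f Ω) :
    2 * (∫ x, ctrans Ω f x ∂μ + ∫ y, f y ∂ρ) ≤ W2sq μ ρ :=
  two_mul_integral_add_le_W2sq hΩ hμΩ hρΩ (continuous_ctrans hΩ hf).continuousOn hf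
    fun x _ _ hy => ctrans_add_le (hΩ.bddAbove_image hf) x hy

end Wasserstein

theorem barycenter_weak_duality_general {d n : ℕ} (Ω : Set (EuclideanSpace ℝ (Fin d)))
    (hcomp : IsCompact Ω)
    (α : Fin n → ℝ) (αm : ℝ) (hα : ∀ i, 0 < α i) (hαm : 0 < αm)
    (μ : Fin n → Measure (EuclideanSpace ℝ (Fin d)))
    (μm : Measure (EuclideanSpace ℝ (Fin d)))
    (hμ : ∀ i, IsProbabilityMeasure (μ i)) (hμm : IsProbabilityMeasure μm)
    (hμΩ : ∀ i, μ i Ωᶜ = 0) (hμmΩ : μm Ωᶜ = 0)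
    (f : Fin n → EuclideanSpace ℝ (Fin d) → ℝ)
    (hf : ∀ i, ContinuousOn (f i) Ω) :
    sInf { B : ℝ | ∃ ρ : Measure (EuclideanSpace ℝ (Fin d)),
        IsProbabilityMeasure ρ ∧ ρ Ωᶜ = 0 ∧
        B = (∑ i, α i / 2 * W2sq (μ i) ρ) + αm / 2 * W2sq μm ρ } ≥
      Dfun Ω α αm μ μm f := by
  refine le_csInf ⟨_, μm, hμm, hμmΩ, rfl⟩ ?_
  rintro _ ⟨ρ, hρ, hρΩ, rfl⟩
  have hfρ i : Integrable (f i) ρ :=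
    integrable_of_continuousOn_of_ae_mem hcomp (ae_iff.mpr hρΩ) (hf i)
  have hterm i :
      α i * (∫ x, ctrans Ω (f i) x ∂μ i + ∫ y, f i y ∂ρ) ≤ α i / 2 * W2sq (μ i) ρ := by
    have := two_mul_integral_ctrans_add_le_W2sq hcomp (hμΩ i) hρΩ (hf i)
    nlinarith [hα i]
  have htermm : αm * (∫ x, ctrans Ω (fun y => -∑ i, α i / αm * f i y) x ∂μm +
      ∫ y, -∑ i, α i / αm * f i y ∂ρ) ≤ αm / 2 * W2sq μm ρ := by
    have := two_mul_integral_ctrans_add_le_W2sq hcomp hμmΩ hρΩ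
      (f := fun y => -∑ i, α i / αm * f i y) (by fun_prop)
    nlinarith
  have hsum := Finset.sum_le_sum fun i (_ : i ∈ Finset.univ) => hterm i
  have hcancel := mul_integral_neg_sum_div hfρ α hαm.ne'
  simp only [mul_add, Finset.sum_add_distrib] at hsum htermm
  unfold Dfun
  linarith

/-- Lower bound part of strong duality: the infimum of the barycenter functional dominates
the dual value `D(f₁,…,f_{m−1})` for every tuple of continuous potentials. -/
theorem barycenter_weak_duality {d n : ℕ} (Ω : Set (EuclideanSpace ℝ (Fin d)))
    (hconv : Convex ℝ Ω) (hcomp : IsCompact Ω) (hne : Ω.Nonempty)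
    (α : Fin n → ℝ) (αm : ℝ) (hα : ∀ i, 0 < α i) (hαm : 0 < αm)
    (hsum : (∑ i, α i) + αm = 1)
    (μ : Fin n → Measure (EuclideanSpace ℝ (Fin d)))
    (μm : Measure (EuclideanSpace ℝ (Fin d)))
    (hμ : ∀ i, IsProbabilityMeasure (μ i)) (hμm : IsProbabilityMeasure μm)
    (hμΩ : ∀ i, μ i Ωᶜ = 0) (hμmΩ : μm Ωᶜ = 0)
    (hac : ∀ i, μ i ≪ volume) (hacm : μm ≪ volume)
    (f : Fin n → EuclideanSpace ℝ (Fin d) → ℝ)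
    (hf : ∀ i, ContinuousOn (f i) Ω) :
    sInf { B : ℝ | ∃ ρ : Measure (EuclideanSpace ℝ (Fin d)),
        IsProbabilityMeasure ρ ∧ ρ Ωᶜ = 0 ∧
        B = (∑ i, α i / 2 * W2sq (μ i) ρ) + αm / 2 * W2sq μm ρ } ≥
      Dfun Ω α αm μ μm f :=
  barycenter_weak_duality_general Ω hcomp α αm hα hαm μ μm hμ hμm hμΩ hμmΩ f hf
end

section
/- Derivative of the c-transform under perturbation: let Ω ⊂ ℝ^d be convex compact, f, h continuous on Ω, and suppose f^c is differentiable at x ∈ interior(Ω) with the infimum in f^c(x) attained at a unique point T_{f^c}(x) = x − ∇f^c(x). Then lim_{ε→0} [(f + εh)^c(x) − f^c(x)]/ε = −h(T_{f^c}(x)). -/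
/-! With `G y = ‖x - y‖² / 2 - f y`, the perturbed transform `(f + εh)^c(x)` is the infimum of
`G - εh` over the compact set `Ω`, and `G` has the unique minimizer `T`. If `Y ε` minimizes
`G - εh`, then `G T - ε h (Y ε) ≤ (f + εh)^c(x) ≤ G T - ε h T`, so the difference quotient lies
within `|h (Y ε) - h T|` of `-h T`. Moreover `G (Y ε) - G T = O(ε)`, and on a compact set a
unique minimizer of a continuous function is separated in value from the complement of each of
its neighbourhoods, so `Y ε → T` and the error tends to zero (Danskin's theorem). -/

open Filter

open Set Topology

section Danskin

variable {α : Type*} [TopologicalSpace α] {K : Set α} {g h : α → ℝ} {T : α}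

theorem IsCompact.ciInf_le_of_continuousOn (hK : IsCompact K) (hg : ContinuousOn g K) {y : α}
    (hy : y ∈ K) : ⨅ z : K, g z ≤ g y := by
  have hbdd : BddBelow (range fun z : K => g z) := by
    rw [← image_eq_range]
    exact hK.bddBelow_image hg
  exact ciInf_le hbdd ⟨y, hy⟩

theorem IsCompact.exists_gap_of_isMinOn_unique (hK : IsCompact K) (hg : ContinuousOn g K)
    (hmin : IsMinOn g K T) (huniq : ∀ y ∈ K, g y = g T → y = T) {U : Set α} (hU : IsOpen U)
    (hTU : T ∈ U) : ∃ δ > 0, ∀ y ∈ K \ U, g T + δ ≤ g y := by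
  rcases (K \ U).eq_empty_or_nonempty with hempty | hne
  · exact ⟨1, one_pos, by simp [hempty]⟩
  obtain ⟨z, hz, hzmin⟩ := (hK.diff hU).exists_isMinOn hne (hg.mono sdiff_subset)
  have hgap : g T < g z := (hmin hz.1).lt_of_ne fun hTz => hz.2 (huniq z hz.1 hTz.symm ▸ hTU)
  exact ⟨g z - g T, sub_pos.mpr hgap, fun y hy => by linarith [isMinOn_iff.mp hzmin y hy]⟩

theorem IsCompact.tendsto_of_tendsto_isMinOn_unique (hK : IsCompact K) (hg : ContinuousOn g K)
    (hmin : IsMinOn g K T) (huniq : ∀ y ∈ K, g y = g T → y = T) {ι : Type*} {l : Filter ι}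
    {Y : ι → α} (hYK : ∀ᶠ i in l, Y i ∈ K) (hgY : Tendsto (fun i => g (Y i)) l (𝓝 (g T))) :
    Tendsto Y l (𝓝 T) := by
  rw [tendsto_nhds]
  intro U hU hTU
  obtain ⟨δ, hδ, hgap⟩ := hK.exists_gap_of_isMinOn_unique hg hmin huniq hU hTU
  filter_upwards [hYK, hgY (Iio_mem_nhds (lt_add_of_pos_right (g T) hδ))] with i hiK hilt
  by_contra hiU
  exact (hgap (Y i) ⟨hiK, hiU⟩).not_gt hilt

theorem IsCompact.tendsto_isMinOn_perturbation (hK : IsCompact K) (hg : ContinuousOn g K)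
    (hh : ContinuousOn h K) (hT : T ∈ K) (hmin : IsMinOn g K T)
    (huniq : ∀ y ∈ K, g y = g T → y = T) {Y : ℝ → α} (hYK : ∀ ε, Y ε ∈ K)
    (hYmin : ∀ ε, IsMinOn (fun y => g y - ε * h y) K (Y ε)) :
    Tendsto Y (𝓝 0) (𝓝 T) := by
  refine hK.tendsto_of_tendsto_isMinOn_unique hg hmin huniq (Eventually.of_forall hYK) ?_
  obtain ⟨M, hM⟩ := hK.exists_bound_of_continuousOn hh
  have hupper : ∀ ε, g (Y ε) ≤ g T + |ε| * (2 * M) := fun ε => by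
    have hYT : g (Y ε) - ε * h (Y ε) ≤ g T - ε * h T := hYmin ε hT
    have hhY : |h (Y ε)| ≤ M := hM _ (hYK ε)
    have hhT : |h T| ≤ M := hM _ hT
    have hε : ε * (h (Y ε) - h T) ≤ |ε| * (2 * M) := by
      refine (le_abs_self _).trans ?_
      rw [abs_mul]
      gcongr
      exact (abs_sub _ _).trans (by linarith)
    linarith
  have hbound : Tendsto (fun ε : ℝ => g T + |ε| * (2 * M)) (𝓝 0) (𝓝 (g T)) := by
    simpa using ((continuous_abs.mul continuous_const).const_add (g T)).tendsto (0 : ℝ)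
  exact tendsto_of_tendsto_of_tendsto_of_le_of_le tendsto_const_nhds hbound
    (fun ε => hmin (hYK ε)) hupper

theorem IsCompact.hasDerivAt_iInf_sub_mul (hK : IsCompact K) (hg : ContinuousOn g K)
    (hh : ContinuousOn h K) (hT : T ∈ K) (hmin : IsMinOn g K T)
    (huniq : ∀ y ∈ K, g y = g T → y = T) :
    HasDerivAt (fun ε : ℝ => ⨅ y : K, (g y - ε * h y)) (-h T) 0 := by
  choose Y hYK hYmin using fun ε : ℝ =>
    hK.exists_isMinOn ⟨T, hT⟩ (hg.sub (continuousOn_const.mul hh))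
  have hYlim : Tendsto Y (𝓝 0) (𝓝 T) :=
    hK.tendsto_isMinOn_perturbation hg hh hT hmin huniq hYK hYmin
  have hhY : Tendsto (fun ε => h (Y ε)) (𝓝 0) (𝓝 (h T)) :=
    (hh T hT).tendsto.comp (tendsto_nhdsWithin_iff.mpr ⟨hYlim, Eventually.of_forall hYK⟩)
  have hval : ∀ ε, ⨅ y : K, (g y - ε * h y) = g (Y ε) - ε * h (Y ε) :=
    fun ε => (hYmin ε).iInf_eq (hYK ε)
  have hval0 : ⨅ y : K, (g y - 0 * h y) = g T := by
    simpa using hmin.iInf_eq hT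
  have hremainder : ∀ ε, |g (Y ε) - ε * h (Y ε) - g T - ε * -h T| ≤ |h (Y ε) - h T| * |ε| :=
    fun ε => by
      have hupper : g (Y ε) - ε * h (Y ε) ≤ g T - ε * h T := hYmin ε hT
      have hlower : g T ≤ g (Y ε) := hmin (hYK ε)
      rw [← abs_mul, abs_le]
      constructor <;> linarith [le_abs_self ((h (Y ε) - h T) * ε), abs_nonneg ((h (Y ε) - h T) * ε)]
  rw [hasDerivAt_iff_isLittleO, Asymptotics.isLittleO_iff]
  intro c hc
  filter_upwards [Metric.tendsto_nhds.mp hhY c hc] with ε hε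
  rw [Real.dist_eq] at hε
  simp only [sub_zero, smul_eq_mul, Real.norm_eq_abs, hval ε, hval0]
  exact (hremainder ε).trans (by gcongr)

end Danskin

theorem ctransform_perturbation_derivative_general {d : ℕ}
    (Ω : Set (EuclideanSpace ℝ (Fin d)))
    (hcomp : IsCompact Ω)
    (f h : EuclideanSpace ℝ (Fin d) → ℝ)
    (hf : ContinuousOn f Ω) (hh : ContinuousOn h Ω)
    (x : EuclideanSpace ℝ (Fin d))
    (hmem : x - gradient (ctrans Ω f) x ∈ Ω)
    (hattain : ctrans Ω f x =
      ‖x - (x - gradient (ctrans Ω f) x)‖ ^ 2 / 2 - f (x - gradient (ctrans Ω f) x))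
    (huniq : ∀ y ∈ Ω, ctrans Ω f x = ‖x - y‖ ^ 2 / 2 - f y →
      y = x - gradient (ctrans Ω f) x) :
    Tendsto (fun ε : ℝ =>
        (ctrans Ω (fun y => f y + ε * h y) x - ctrans Ω f x) / ε)
      (nhdsWithin 0 {0}ᶜ)
      (nhds (-h (x - gradient (ctrans Ω f) x))) := by
  set T := x - gradient (ctrans Ω f) x
  set G : EuclideanSpace ℝ (Fin d) → ℝ := fun y => ‖x - y‖ ^ 2 / 2 - f y
  have hG : ContinuousOn G Ω := by fun_prop
  have hmin : IsMinOn G Ω T := isMinOn_iff.mpr fun y hy =>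
    hattain.symm.trans_le (hcomp.ciInf_le_of_continuousOn hG hy)
  have hderiv : HasDerivAt (fun ε : ℝ => ctrans Ω (fun y => f y + ε * h y) x) (-h T) 0 := by
    simpa only [ctrans, sub_add_eq_sub_sub] using hcomp.hasDerivAt_iInf_sub_mul hG hh hmem hmin
      fun y hy hyT => huniq y hy (hattain.trans hyT.symm)
  refine (hasDerivAt_iff_tendsto_slope.mp hderiv).congr fun ε => ?_
  simp [slope_def_field]

/-- Derivative of the c-transform under perturbation: if `f^c` is differentiable at `x`
with the infimum attained uniquely at `T_{f^c}(x) = x − ∇f^c(x)`, then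
`lim_{ε→0} [(f+εh)^c(x) − f^c(x)]/ε = −h(T_{f^c}(x))`. -/
theorem ctransform_perturbation_derivative {d : ℕ}
    (Ω : Set (EuclideanSpace ℝ (Fin d)))
    (hconv : Convex ℝ Ω) (hcomp : IsCompact Ω)
    (f h : EuclideanSpace ℝ (Fin d) → ℝ)
    (hf : ContinuousOn f Ω) (hh : ContinuousOn h Ω)
    (x : EuclideanSpace ℝ (Fin d)) (hx : x ∈ interior Ω)
    (hdiff : DifferentiableAt ℝ (ctrans Ω f) x)
    (hmem : x - gradient (ctrans Ω f) x ∈ Ω)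
    (hattain : ctrans Ω f x =
      ‖x - (x - gradient (ctrans Ω f) x)‖ ^ 2 / 2 - f (x - gradient (ctrans Ω f) x))
    (huniq : ∀ y ∈ Ω, ctrans Ω f x = ‖x - y‖ ^ 2 / 2 - f y →
      y = x - gradient (ctrans Ω f) x) :
    Tendsto (fun ε : ℝ =>
        (ctrans Ω (fun y => f y + ε * h y) x - ctrans Ω f x) / ε)
      (nhdsWithin 0 {0}ᶜ)
      (nhds (-h (x - gradient (ctrans Ω f) x))) :=
  ctransform_perturbation_derivative_general Ω hcomp f h hf hh x hmem hattain huniq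
end

section
/- Pushforward value of the dual: let Ω ⊂ ℝ^d be convex compact, μ ∈ P₂(Ω) absolutely continuous, f c-concave with f^c differentiable μ-a.e., and T := id − ∇f^c. Then (1/2) W₂²(μ, T_#μ) = ∫_Ω f^c dμ + ∫_Ω f d[T_#μ]. -/
open MeasureTheory

/-!
For every `x` the infimum defining `f^c x` is attained at some `y ∈ Ω` (compactness of `Ω`
and upper semicontinuity of the c-concave `f`). Since `f^c ≤ ‖· - y‖² / 2 - f y`
with equality at `x`, differentiability of `f^c` at `x` forces `∇f^c x = x - y`, i.e. `T x = y`.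
Hence `f^c x + f (T x) = ‖x - T x‖² / 2` a.e., while `f^c x + f y ≤ ‖x - y‖² / 2` for all
`y ∈ Ω`. Integrating the inequality against any coupling of `μ` and `T_#μ` and the equality
against the graph coupling `(id, T)_#μ` shows that the latter is optimal with cost
`2 (∫ f^c dμ + ∫ f d(T_#μ))`.
-/

open Filter Topology

section Calculus

variable {E : Type*} [NormedAddCommGroup E] [InnerProductSpace ℝ E] [CompleteSpace E]

theorem hasGradientAt_half_norm_sub_sq (x y : E) :
    HasGradientAt (fun z => ‖z - y‖ ^ 2 / 2) (x - y) x := by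
  rw [hasGradientAt_iff_hasFDerivAt]
  simp_rw [div_eq_mul_inv]
  refine (HasFDerivAt.mul_const ((hasFDerivAt_id x).sub_const y).norm_sq 2⁻¹).congr_fderiv ?_
  ext v
  simp

theorem gradient_eq_of_le_of_eq {F h : E → ℝ} {x : E} (hF : DifferentiableAt ℝ F x)
    (hh : DifferentiableAt ℝ h x) (hle : F ≤ᶠ[𝓝 x] h) (heq : F x = h x) :
    gradient F x = gradient h x := by
  have hmin : IsLocalMin (h - F) x := hle.mono fun z hz => by simpa [heq] using hz
  have := hmin.fderiv_eq_zero
  rw [fderiv_sub hh hF, sub_eq_zero] at this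
  simp [gradient, this]

theorem measurable_gradient [MeasurableSpace E] [BorelSpace E] [SecondCountableTopology E]
    (F : E → ℝ) : Measurable (gradient F) :=
  (InnerProductSpace.toDual ℝ E).symm.continuous.measurable.comp (measurable_fderiv ℝ F)

end Calculus

section CTransform

variable {d : ℕ} {Ω : Set (EuclideanSpace ℝ (Fin d))} {f : EuclideanSpace ℝ (Fin d) → ℝ}

theorem bddBelow_range_ctrans (hf : BddAbove (f '' Ω)) (x : EuclideanSpace ℝ (Fin d)) :
    BddBelow (Set.range fun y : Ω => ‖x - (y : EuclideanSpace ℝ (Fin d))‖ ^ 2 / 2 - f y) := by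
  obtain ⟨B, hB⟩ := hf
  refine ⟨-B, ?_⟩
  rintro _ ⟨⟨y, hy⟩, rfl⟩
  have : f y ≤ B := hB ⟨y, hy, rfl⟩
  dsimp only
  linarith [sq_nonneg ‖x - y‖]

theorem ctrans_le (hf : BddAbove (f '' Ω)) (x : EuclideanSpace ℝ (Fin d))
    {y : EuclideanSpace ℝ (Fin d)} (hy : y ∈ Ω) : ctrans Ω f x ≤ ‖x - y‖ ^ 2 / 2 - f y :=
  ciInf_le (bddBelow_range_ctrans hf x) ⟨y, hy⟩

theorem le_ctrans (hΩ : Ω.Nonempty) {c : ℝ} {x : EuclideanSpace ℝ (Fin d)}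
    (h : ∀ y ∈ Ω, c ≤ ‖x - y‖ ^ 2 / 2 - f y) : c ≤ ctrans Ω f x :=
  have : Nonempty Ω := hΩ.to_subtype
  le_ciInf fun y => h y y.2

theorem ctrans_eq_zero_of_not_bddAbove (hΩ : Bornology.IsBounded Ω)
    (hf : ¬BddAbove (f '' Ω)) : ctrans Ω f = 0 := by
  funext x
  refine Real.iInf_of_not_bddBelow fun ⟨m, hm⟩ => hf ?_
  obtain ⟨R, hR⟩ := hΩ.subset_closedBall x
  refine ⟨R ^ 2 / 2 - m, ?_⟩
  rintro _ ⟨y, hy, rfl⟩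
  have hmy : m ≤ ‖x - y‖ ^ 2 / 2 - f y := hm ⟨⟨y, hy⟩, rfl⟩
  have hxy : ‖x - y‖ ≤ R := by simpa [dist_eq_norm, norm_sub_rev] using hR hy
  nlinarith [norm_nonneg (x - y)]

theorem exists_abs_ctrans_le (hΩ : Bornology.IsBounded Ω) (hne : Ω.Nonempty)
    (f : EuclideanSpace ℝ (Fin d) → ℝ) : ∃ C, ∀ x ∈ Ω, |ctrans Ω f x| ≤ C := by
  by_cases hf : BddAbove (f '' Ω)
  · obtain ⟨B, hB⟩ := hf
    obtain ⟨z, hz⟩ := id hne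
    refine ⟨max |-B| |Metric.diam Ω ^ 2 / 2 - f z|, fun x hx => abs_le_max_abs_abs ?_ ?_⟩
    · refine le_ctrans hne fun y hy => ?_
      have : f y ≤ B := hB ⟨y, hy, rfl⟩
      linarith [sq_nonneg ‖x - y‖]
    · have hxz : ‖x - z‖ ≤ Metric.diam Ω := by
        simpa [dist_eq_norm] using Metric.dist_le_diam_of_mem hΩ hx hz
      calc ctrans Ω f x ≤ ‖x - z‖ ^ 2 / 2 - f z := ctrans_le ⟨B, hB⟩ x hz
        _ ≤ Metric.diam Ω ^ 2 / 2 - f z := by gcongr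
  · exact ⟨0, fun x _ => by simp [ctrans_eq_zero_of_not_bddAbove hΩ hf]⟩

theorem upperSemicontinuous_ctrans (hΩ : Bornology.IsBounded Ω) (hne : Ω.Nonempty)
    (f : EuclideanSpace ℝ (Fin d) → ℝ) : UpperSemicontinuous (ctrans Ω f) := by
  by_cases hf : BddAbove (f '' Ω)
  · have : Nonempty Ω := hne.to_subtype
    exact upperSemicontinuous_ciInf (bddBelow_range_ctrans hf)
      fun y => (by fun_prop : Continuous _).upperSemicontinuous
  · rw [ctrans_eq_zero_of_not_bddAbove hΩ hf]
    exact upperSemicontinuous_const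

theorem exists_ctrans_eq (hΩ : IsCompact Ω) (hne : Ω.Nonempty) (hf : UpperSemicontinuous f)
    (x : EuclideanSpace ℝ (Fin d)) : ∃ y ∈ Ω, ctrans Ω f x = ‖x - y‖ ^ 2 / 2 - f y := by
  have hcost : LowerSemicontinuous fun y => ‖x - y‖ ^ 2 / 2 - f y :=
    ((continuous_const.sub continuous_id).norm.pow 2 |>.div_const 2).lowerSemicontinuous.add
      hf.neg
  obtain ⟨y, hy, hmin⟩ := (hcost.lowerSemicontinuousOn Ω).exists_isMinOn hne hΩ
  have hbdd := (hf.upperSemicontinuousOn Ω).bddAbove_of_isCompact hΩ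
  exact ⟨y, hy, (ctrans_le hbdd x hy).antisymm (le_ctrans hne fun z hz => hmin hz)⟩

theorem gradient_ctrans_eq (hf : BddAbove (f '' Ω)) {x y : EuclideanSpace ℝ (Fin d)}
    (hy : y ∈ Ω) (hx : DifferentiableAt ℝ (ctrans Ω f) x)
    (hxy : ctrans Ω f x = ‖x - y‖ ^ 2 / 2 - f y) :
    gradient (ctrans Ω f) x = x - y := by
  have hq : HasGradientAt (fun z => ‖z - y‖ ^ 2 / 2 - f y) (x - y) x :=
    hasGradientAt_iff_hasFDerivAt.2
      ((hasGradientAt_iff_hasFDerivAt.1 (hasGradientAt_half_norm_sub_sq x y)).sub_const _)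
  rw [gradient_eq_of_le_of_eq hx hq.differentiableAt
    (Eventually.of_forall fun z => ctrans_le hf z hy) hxy, hq.gradient]

end CTransform

section Transport

theorem integral_add_le_integral_of_map_fst_map_snd {α β : Type*} [MeasurableSpace α]
    [MeasurableSpace β] {π : Measure (α × β)} {φ : α → ℝ} {ψ : β → ℝ} {c : α × β → ℝ}
    (hφ : Integrable φ (π.map Prod.fst)) (hψ : Integrable ψ (π.map Prod.snd))
    (hc : Integrable c π) (hle : ∀ᵐ p ∂π, φ p.1 + ψ p.2 ≤ c p) :
    ∫ x, φ x ∂(π.map Prod.fst) + ∫ y, ψ y ∂(π.map Prod.snd) ≤ ∫ p, c p ∂π := by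
  have hφ₁ : Integrable (fun p => φ p.1) π := hφ.comp_measurable measurable_fst
  have hψ₂ : Integrable (fun p => ψ p.2) π := hψ.comp_measurable measurable_snd
  rw [integral_map measurable_fst.aemeasurable hφ.1, integral_map measurable_snd.aemeasurable hψ.1,
    ← integral_add hφ₁ hψ₂]
  exact integral_mono_ae (hφ₁.add hψ₂) hc hle

theorem integrable_norm_sub_sq_of_ae_mem {E : Type*} [NormedAddCommGroup E] [MeasurableSpace E]
    [BorelSpace E] [SecondCountableTopology E] {K : Set E} (hK : Bornology.IsBounded K)
    {π : Measure (E × E)} [IsFiniteMeasure π] (hπ : ∀ᵐ p ∂π, p.1 ∈ K ∧ p.2 ∈ K) :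
    Integrable (fun p => ‖p.1 - p.2‖ ^ 2) π := by
  refine .of_bound (by fun_prop) (Metric.diam K ^ 2) (hπ.mono fun p ⟨h1, h2⟩ => ?_)
  have := Metric.dist_le_diam_of_mem hK h1 h2
  rw [dist_eq_norm] at this
  simp only [norm_pow, norm_norm]
  gcongr

variable {d : ℕ} {μ : Measure (EuclideanSpace ℝ (Fin d))}
  {T : EuclideanSpace ℝ (Fin d) → EuclideanSpace ℝ (Fin d)}

theorem W2sq_map_eq_of_forall_le (hT : Measurable T)
    (hle : ∀ π : Measure (EuclideanSpace ℝ (Fin d) × EuclideanSpace ℝ (Fin d)),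
      π.map Prod.fst = μ → π.map Prod.snd = μ.map T →
      ∫ x, ‖x - T x‖ ^ 2 ∂μ ≤ ∫ p, ‖p.1 - p.2‖ ^ 2 ∂π) :
    W2sq μ (μ.map T) = ∫ x, ‖x - T x‖ ^ 2 ∂μ := by
  have hgraph : Measurable fun x => (x, T x) := by fun_prop
  refine IsLeast.csInf_eq ⟨⟨μ.map fun x => (x, T x), ?_, ?_, ?_⟩,
    fun r ⟨π, h1, h2, hr⟩ => hr ▸ hle π h1 h2⟩
  · rw [Measure.map_map measurable_fst hgraph, Function.comp_def, Measure.map_id']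
  · rw [Measure.map_map measurable_snd hgraph, Function.comp_def]
  · rw [integral_map hgraph.aemeasurable (by fun_prop)]

theorem half_W2sq_map_eq [IsFiniteMeasure μ] {K : Set (EuclideanSpace ℝ (Fin d))}
    (hK : Bornology.IsBounded K) (hKm : MeasurableSet K) (hμK : ∀ᵐ x ∂μ, x ∈ K)
    (hT : Measurable T) (hTK : ∀ᵐ x ∂μ, T x ∈ K) {φ ψ : EuclideanSpace ℝ (Fin d) → ℝ}
    (hφ : Integrable φ μ) (hψ : Integrable ψ (μ.map T))
    (hle : ∀ x ∈ K, ∀ y ∈ K, φ x + ψ y ≤ ‖x - y‖ ^ 2 / 2)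
    (heq : ∀ᵐ x ∂μ, φ x + ψ (T x) = ‖x - T x‖ ^ 2 / 2) :
    1 / 2 * W2sq μ (μ.map T) = ∫ x, φ x ∂μ + ∫ y, ψ y ∂(μ.map T) := by
  have hgraph : ∫ x, ‖x - T x‖ ^ 2 ∂μ = 2 * (∫ x, φ x ∂μ + ∫ y, ψ y ∂(μ.map T)) := by
    have hψT : Integrable (fun x => ψ (T x)) μ := hψ.comp_measurable hT
    rw [integral_map hT.aemeasurable hψ.1, ← integral_add hφ hψT, ← integral_const_mul]
    refine integral_congr_ae (heq.mono fun x hx => ?_)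
    simp only [hx]
    ring
  have hcoupling : ∀ π : Measure (EuclideanSpace ℝ (Fin d) × EuclideanSpace ℝ (Fin d)),
      π.map Prod.fst = μ → π.map Prod.snd = μ.map T →
      ∫ x, ‖x - T x‖ ^ 2 ∂μ ≤ ∫ p, ‖p.1 - p.2‖ ^ 2 ∂π := by
    intro π h1 h2
    have : IsFiniteMeasure (π.map Prod.fst) := h1 ▸ ‹_›
    have : IsFiniteMeasure π := Measure.isFiniteMeasure_of_map measurable_fst.aemeasurable
    have hπK : ∀ᵐ p ∂π, p.1 ∈ K ∧ p.2 ∈ K :=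
      (ae_of_ae_map measurable_fst.aemeasurable (h1 ▸ hμK)).and
        (ae_of_ae_map measurable_snd.aemeasurable (h2 ▸ (ae_map_iff hT.aemeasurable hKm).2 hTK))
    have := integral_add_le_integral_of_map_fst_map_snd (h1 ▸ hφ) (h2 ▸ hψ)
      ((integrable_norm_sub_sq_of_ae_mem hK hπK).div_const 2)
      (hπK.mono fun p hp => hle _ hp.1 _ hp.2)
    rw [h1, h2, integral_div] at this
    linarith
  rw [W2sq_map_eq_of_forall_le hT hcoupling, hgraph]
  ring

end Transport

theorem pushforward_dual_value_general {d : ℕ} (Ω : Set (EuclideanSpace ℝ (Fin d)))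
    (hcomp : IsCompact Ω)
    (μ : Measure (EuclideanSpace ℝ (Fin d))) (hμ : IsProbabilityMeasure μ)
    (hμΩ : μ Ωᶜ = 0)
    (f g : EuclideanSpace ℝ (Fin d) → ℝ) (hcc : f = ctrans Ω g)
    (hdiff : ∀ᵐ x ∂μ, DifferentiableAt ℝ (ctrans Ω f) x) :
    (1 / 2 : ℝ) * W2sq μ (μ.map (fun x => x - gradient (ctrans Ω f) x)) =
      (∫ x, ctrans Ω f x ∂μ) +
        ∫ x, f x ∂(μ.map (fun x => x - gradient (ctrans Ω f) x)) := by
  have hΩ : ∀ᵐ x ∂μ, x ∈ Ω := ae_iff.2 hμΩ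
  have hne : Ω.Nonempty := hΩ.exists
  have hb : Bornology.IsBounded Ω := hcomp.isBounded
  have hf : UpperSemicontinuous f := hcc ▸ upperSemicontinuous_ctrans hb hne g
  have hfbdd : BddAbove (f '' Ω) := (hf.upperSemicontinuousOn Ω).bddAbove_of_isCompact hcomp
  obtain ⟨Cf, hCf⟩ := exists_abs_ctrans_le hb hne g
  obtain ⟨CF, hCF⟩ := exists_abs_ctrans_le hb hne f
  rw [← hcc] at hCf
  set T := fun x => x - gradient (ctrans Ω f) x
  have hT : Measurable T := measurable_id.sub (measurable_gradient _)
  have hopt : ∀ᵐ x ∂μ, T x ∈ Ω ∧ ctrans Ω f x + f (T x) = ‖x - T x‖ ^ 2 / 2 := by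
    filter_upwards [hdiff] with x hx
    obtain ⟨y, hy, hxy⟩ := exists_ctrans_eq hcomp hne hf x
    have hTx : T x = y := by simp [T, gradient_ctrans_eq hfbdd hy hx hxy]
    exact ⟨hTx ▸ hy, by rw [hTx, hxy]; ring⟩
  have hTΩ : ∀ᵐ x ∂μ, T x ∈ Ω := hopt.mono fun _ h => h.1
  refine half_W2sq_map_eq hb hcomp.isClosed.measurableSet hΩ hT hTΩ ?_ ?_
    (fun x _ y hy => by linarith [ctrans_le hfbdd x hy]) (hopt.mono fun _ h => h.2)
  · exact .of_bound (upperSemicontinuous_ctrans hb hne f).measurable.aestronglyMeasurable CF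
      (hΩ.mono hCF)
  · exact .of_bound hf.measurable.aestronglyMeasurable Cf
      ((ae_map_iff hT.aemeasurable hcomp.isClosed.measurableSet).2 hTΩ |>.mono hCf)

/-- Pushforward value of the dual: for a c-concave `f` with `T = id − ∇f^c`,
`(1/2) W₂²(μ, T_#μ) = ∫ f^c dμ + ∫ f d(T_#μ)`. -/
theorem pushforward_dual_value {d : ℕ} (Ω : Set (EuclideanSpace ℝ (Fin d)))
    (hconv : Convex ℝ Ω) (hcomp : IsCompact Ω)
    (μ : Measure (EuclideanSpace ℝ (Fin d))) (hμ : IsProbabilityMeasure μ)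
    (hμΩ : μ Ωᶜ = 0) (hac : μ ≪ volume)
    (f g : EuclideanSpace ℝ (Fin d) → ℝ) (hcc : f = ctrans Ω g)
    (hdiff : ∀ᵐ x ∂μ, DifferentiableAt ℝ (ctrans Ω f) x) :
    (1 / 2 : ℝ) * W2sq μ (μ.map (fun x => x - gradient (ctrans Ω f) x)) =
      (∫ x, ctrans Ω f x ∂μ) +
        ∫ x, f x ∂(μ.map (fun x => x - gradient (ctrans Ω f) x)) :=
  pushforward_dual_value_general Ω hcomp μ hμ hμΩ f g hcc hdiff
end
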